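/- arXiv:2106.01997 — 5 statements merged into one kernel-verified Lean document; each statement's English description precedes it below -/
import Mathlib

section
/- If the test-recent probability function φ is nonnegative and φ(u)=0 for all u > τ, and the infection-duration density is uniform on [0,τ] (i.e., Pr(T=t-u | T≤t, A(t)=1) is constant in u on [0,τ]), then the probability of testing recent satisfies P_rec(t) = μ·λ(t)·(1−p(t)), where μ = ∫₀^∞ φ(u)du, p(t) is the prevalence, and λ(t) is the incidence, defined by λ(t)(1−p(t)) = Pr(T=t | A(t)=1). -/
open MeasureTheory Set

/-- Snapshot identity: if φ ≥ 0 vanishes beyond τ and the infection-duration density is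
uniform on [0,τ] with value λ(t)(1-p(t))/p(t), then P_rec = μ·λ·(1-p). -/
theorem snapshot_identity (φ f : ℝ → ℝ) (τ p lam Prec μ : ℝ)
    (hp : 0 < p) (hp1 : p < 1) (hτ : 0 ≤ τ)
    (hφpos : ∀ u, 0 ≤ φ u)
    (hφtail : ∀ u, τ < u → φ u = 0)
    (hfconst : ∀ u ∈ Icc (0:ℝ) τ, f u = f 0)
    (hf0 : f 0 = lam * (1 - p) / p)
    (hint : IntegrableOn φ (Ioi 0))
    (hμ : μ = ∫ u in Ioi (0:ℝ), φ u)
    (hPrec : Prec = p * ∫ u in Ioi (0:ℝ), φ u * f u) :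
    Prec = μ * lam * (1 - p) := by
  have key : EqOn (fun u => φ u * f u) (fun u => φ u * f 0) (Ioi (0:ℝ)) := by
    intro u hu
    rcases le_or_gt u τ with h | h
    · simp only []
      rw [hfconst u ⟨le_of_lt hu, h⟩]
    · simp only []
      rw [hφtail u h]; ring
  have h1 : (∫ u in Ioi (0:ℝ), φ u * f u) = (∫ u in Ioi (0:ℝ), φ u) * f 0 := by
    rw [setIntegral_congr_fun measurableSet_Ioi key, integral_mul_const]
  rw [hPrec, h1, ← hμ, hf0]
  field_simp
end

section
/- Suppose φ(u) = β for all u ≥ T* (constant tail), and the infection-duration density among infected eligible subjects is constant on [0,T*] with value f(0) = λ(t)(1−p(t))/p(t). Then the test-recent probability satisfies P_rec(t) = (Ω − β·T*)·λ(t)·(1−p(t)) + p(t)·β, where Ω = ∫₀^{T*} φ(u)du is the mean duration of recent infection (MDRI). -/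
open MeasureTheory Set

/-!
Split `(0, ∞)` at `T*`. On `(0, T*]` the density is the constant `c = λ(1-p)/p`, so that piece of
`∫ φ f` is `c Ω` and it carries mass `c T*`; on `(T*, ∞)` the test-recent probability is the
constant `β`, so that piece is `β` times the remaining mass `1 - c T*`. Multiplying by `p` turns
`p c` into `λ(1-p)`.
-/

theorem intervalIntegral_mul_eq_const_mul_of_eqOn {φ f : ℝ → ℝ} {a b c : ℝ} (hab : a ≤ b)
    (hf : ∀ u ∈ Icc a b, f u = c) :
    ∫ u in a..b, φ u * f u = c * ∫ u in a..b, φ u := by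
  rw [intervalIntegral.integral_congr (g := fun u => φ u * c) fun u hu => by
      rw [hf u (uIcc_of_le hab ▸ hu)],
    intervalIntegral.integral_mul_const, mul_comm]

theorem integral_Ioi_mul_eq_of_eqOn_Icc_of_eqOn_Ici {φ f : ℝ → ℝ} {a b c β : ℝ} (hab : a ≤ b)
    (hφ : ∀ u, b ≤ u → φ u = β) (hf : ∀ u ∈ Icc a b, f u = c)
    (hmass : ∫ u in Ioi a, f u = 1) (hφf : IntegrableOn (fun u => φ u * f u) (Ioi a)) :
    ∫ u in Ioi a, φ u * f u = c * (∫ u in a..b, φ u) + β * (1 - c * (b - a)) := by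
  have hf_int : IntegrableOn f (Ioi a) :=
    Integrable.of_integral_ne_zero (by rw [hmass]; exact one_ne_zero)
  have head_mass : ∫ u in a..b, f u = c * (b - a) := by
    simpa using intervalIntegral_mul_eq_const_mul_of_eqOn (φ := fun _ => 1) hab hf
  have tail_mass : ∫ u in Ioi b, f u = 1 - c * (b - a) := by
    rw [← head_mass, ← hmass, ← intervalIntegral.integral_Ioi_sub_Ioi hf_int hab, sub_sub_cancel]
  have tail : ∫ u in Ioi b, φ u * f u = β * (1 - c * (b - a)) := by
    rw [setIntegral_congr_fun measurableSet_Ioi fun u hu => by rw [hφ u (le_of_lt hu)],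
      integral_const_mul, tail_mass]
  rw [← intervalIntegral.integral_interval_add_Ioi hφf (hφf.mono_set (Ioi_subset_Ioi hab)),
    intervalIntegral_mul_eq_const_mul_of_eqOn hab hf, tail]

theorem adjusted_identity_general (φ f : ℝ → ℝ) (Tstar p lam Prec Ω β : ℝ)
    (hp : 0 < p) (hT : 0 < Tstar)
    (hφtail : ∀ u, Tstar ≤ u → φ u = β)
    (hfconst : ∀ u ∈ Icc (0:ℝ) Tstar, f u = lam * (1 - p) / p)
    (hfmass : (∫ u in Ioi (0:ℝ), f u) = 1)
    (hΩ : Ω = ∫ u in (0:ℝ)..Tstar, φ u)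
    (hφfint : IntegrableOn (fun u => φ u * f u) (Ioi 0))
    (hPrec : Prec = p * ∫ u in Ioi (0:ℝ), φ u * f u) :
    Prec = (Ω - β * Tstar) * lam * (1 - p) + p * β := by
  have hpc : p * (lam * (1 - p) / p) = lam * (1 - p) := by field_simp
  rw [hPrec, integral_Ioi_mul_eq_of_eqOn_Icc_of_eqOn_Ici hT.le hφtail hfconst hfmass hφfint, ← hΩ]
  linear_combination (Ω - β * Tstar) * hpc

/-- Adjusted-estimator identity: constant tail φ(u)=β for u ≥ T*, uniform duration density
on [0,T*] with value λ(1-p)/p, total mass 1, then P_rec = (Ω-βT*)λ(1-p) + pβ. -/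
theorem adjusted_identity (φ f : ℝ → ℝ) (Tstar p lam Prec Ω β : ℝ)
    (hp : 0 < p) (hp1 : p < 1) (hT : 0 < Tstar) (hlam : 0 ≤ lam)
    (hφrange : ∀ u, 0 ≤ φ u ∧ φ u ≤ 1)
    (hβ : β = φ Tstar)
    (hφtail : ∀ u, Tstar ≤ u → φ u = β)
    (hfconst : ∀ u ∈ Icc (0:ℝ) Tstar, f u = lam * (1 - p) / p)
    (hfpos : ∀ u, 0 ≤ f u)
    (hfint : IntegrableOn f (Ioi 0))
    (hfmass : (∫ u in Ioi (0:ℝ), f u) = 1)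
    (hΩ : Ω = ∫ u in (0:ℝ)..Tstar, φ u)
    (hφfint : IntegrableOn (fun u => φ u * f u) (Ioi 0))
    (hPrec : Prec = p * ∫ u in Ioi (0:ℝ), φ u * f u) :
    Prec = (Ω - β * Tstar) * lam * (1 - p) + p * β :=
  adjusted_identity_general φ f Tstar p lam Prec Ω β hp hT hφtail hfconst hfmass hΩ hφfint hPrec
end

section
/- If incidence is linear, λ(t−u) = λ(t) + ρ·u for u ∈ [0,T*], φ(u) = β for u ≥ T*, Ω = ∫₀^{T*}φ(u)du, and Ω > β·T*, then the expected value of the adjusted estimator, E = ∫₀^{T*} ((φ(u)−β)/(Ω − β·T*))·λ(t−u)du, equals λ(t) + ρ·ω* where ω* = (∫₀^{T*} u·(φ(u)−β)du)/(Ω − β·T*); equivalently the bias of the adjusted estimator is ρ·ω*. -/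
open MeasureTheory Set intervalIntegral

/-- Expected adjusted estimator under linear incidence equals λ(t) + ρ·ω* = λ(t - ω*),
where ω* is the mean shadow time of the adjusted estimator. -/
theorem adjusted_expected_bias (φ lam : ℝ → ℝ) (t Tstar ρ Ω β ωstar E : ℝ)
    (hT : 0 < Tstar)
    (hφrange : ∀ u, 0 ≤ φ u ∧ φ u ≤ 1)
    (hφtail : ∀ u, Tstar ≤ u → φ u = β)
    (hint : IntervalIntegrable φ volume 0 Tstar)
    (hintu : IntervalIntegrable (fun u => u * (φ u - β)) volume 0 Tstar)
    (hΩ : Ω = ∫ u in (0:ℝ)..Tstar, φ u) (hΩβ : β * Tstar < Ω)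
    (hω : ωstar = (∫ u in (0:ℝ)..Tstar, u * (φ u - β)) / (Ω - β * Tstar))
    (hlin : ∀ s ∈ Icc (t - Tstar) t, lam s = lam t + ρ * (t - s))
    (hE : E = ∫ u in (0:ℝ)..Tstar, ((φ u - β) / (Ω - β * Tstar)) * lam (t - u)) :
    E = lam t + ρ * ωstar ∧ E - lam t = ρ * ωstar := by
  set D := Ω - β * Tstar with hDdef
  have hD : 0 < D := by simp [hDdef]; linarith
  have hDne : D ≠ 0 := ne_of_gt hD
  -- rewrite lam on the interval
  have hcong : (∫ u in (0:ℝ)..Tstar, ((φ u - β) / D) * lam (t - u))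
      = ∫ u in (0:ℝ)..Tstar, ((lam t / D) * (φ u - β) + (ρ / D) * (u * (φ u - β))) := by
    apply intervalIntegral.integral_congr
    intro u hu
    rw [Set.uIcc_of_le (le_of_lt hT)] at hu
    have hs : t - u ∈ Icc (t - Tstar) t := by
      constructor <;> [linarith [hu.2]; linarith [hu.1]]
    have := hlin (t - u) hs
    show (φ u - β) / D * lam (t - u) = _
    rw [this]
    ring
  have hint1 : IntervalIntegrable (fun u => (lam t / D) * (φ u - β)) volume 0 Tstar :=
    ((hint.sub (intervalIntegrable_const)).const_mul _)
  have hint2 : IntervalIntegrable (fun u => (ρ / D) * (u * (φ u - β))) volume 0 Tstar :=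
    hintu.const_mul _
  have hsplit : (∫ u in (0:ℝ)..Tstar, ((lam t / D) * (φ u - β) + (ρ / D) * (u * (φ u - β))))
      = (lam t / D) * (∫ u in (0:ℝ)..Tstar, (φ u - β))
        + (ρ / D) * (∫ u in (0:ℝ)..Tstar, u * (φ u - β)) := by
    rw [intervalIntegral.integral_add hint1 hint2,
      intervalIntegral.integral_const_mul, intervalIntegral.integral_const_mul]
  have hsub : (∫ u in (0:ℝ)..Tstar, (φ u - β)) = D := by
    rw [intervalIntegral.integral_sub hint intervalIntegrable_const,
      intervalIntegral.integral_const]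
    simp only [smul_eq_mul, sub_zero, hDdef, hΩ]
    ring
  have hEeq : E = lam t + ρ * ωstar := by
    rw [hE, hcong, hsplit, hsub, hω]
    field_simp
  exact ⟨hEeq, by rw [hEeq]; ring⟩
end

section
/- Under linearly decreasing incidence λ(s) = λ + ρ(t−s) with λ, ρ > 0 and constant prevalence p ∈ (0,1), the equation ∫_{t−c}^{T} (λ(s)(1−p)/p) ds = e (where c solves the same integral over [t−c, t] equal to 1) has solution T = t − (√(λ² + 2ρ·(p/(1−p))·(1−e)) − λ)/ρ for e ∈ [0,1]. -/
open MeasureTheory Set intervalIntegral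

/-!
With `Λ(x) = lam * x + ρ * x ^ 2 / 2` the cumulative incidence over `[t - x, t]`, the integral
from `t - c` to `t - x` is `Λ(c) - Λ(x) = p / (1 - p) - Λ(x)`. The proposed endpoint is
`t - x` where `x` is the root of the quadratic `Λ(x) = p / (1 - p) * (1 - e)`, so after the
factor `(1 - p) / p` the integral is `1 - (1 - e) = e`.
-/

theorem integral_linear_incidence (lam ρ t a b : ℝ) :
    ∫ s in (t - a)..(t - b), lam + ρ * (t - s) =
      (lam * a + ρ * a ^ 2 / 2) - (lam * b + ρ * b ^ 2 / 2) := by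
  rw [intervalIntegral.integral_comp_sub_left (fun x => lam + ρ * x), sub_sub_cancel,
    sub_sub_cancel, intervalIntegral.integral_add intervalIntegrable_const
      (intervalIntegrable_id.const_mul ρ),
    intervalIntegral.integral_const, intervalIntegral.integral_const_mul, integral_id,
    smul_eq_mul]
  ring

theorem linear_quadratic_eq_of_sqrt {lam ρ y : ℝ} (hρ : ρ ≠ 0) (hD : 0 ≤ lam ^ 2 + 2 * ρ * y) :
    lam * ((Real.sqrt (lam ^ 2 + 2 * ρ * y) - lam) / ρ)
      + ρ * ((Real.sqrt (lam ^ 2 + 2 * ρ * y) - lam) / ρ) ^ 2 / 2 = y := by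
  have hsq := Real.sq_sqrt hD
  field_simp
  linear_combination hsq

theorem linear_incidence_simulation_general (lam ρ p t c : ℝ)
    (hρ : 0 < ρ) (hp : 0 < p) (hp1 : p < 1)
    (hc : lam * c + ρ * c ^ 2 / 2 = p / (1 - p)) :
    ∀ e ∈ Icc (0:ℝ) 1,
      (∫ s in (t - c)..(t - (Real.sqrt (lam ^ 2 + 2 * ρ * (p / (1 - p)) * (1 - e)) - lam) / ρ),
        (lam + ρ * (t - s)) * (1 - p) / p) = e := by
  rintro e ⟨-, he1⟩
  have hK : 0 ≤ p / (1 - p) := div_nonneg hp.le (by linarith)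
  have hD : 0 ≤ lam ^ 2 + 2 * ρ * (p / (1 - p) * (1 - e)) := by
    have := mul_nonneg hK (sub_nonneg.mpr he1)
    positivity
  rw [intervalIntegral.integral_div, intervalIntegral.integral_mul_const,
    integral_linear_incidence, hc, mul_assoc (2 * ρ), linear_quadratic_eq_of_sqrt hρ.ne' hD]
  have : 1 - p ≠ 0 := by linarith
  field_simp
  ring

/-- Linearly decreasing incidence: closed-form infection time solving the
simulation integral equation. -/
theorem linear_incidence_simulation (lam ρ p t c : ℝ)
    (hlam : 0 < lam) (hρ : 0 < ρ) (hp : 0 < p) (hp1 : p < 1) (hcpos : 0 < c)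
    (hc : lam * c + ρ * c ^ 2 / 2 = p / (1 - p)) :
    ∀ e ∈ Icc (0:ℝ) 1,
      (∫ s in (t - c)..(t - (Real.sqrt (lam ^ 2 + 2 * ρ * (p / (1 - p)) * (1 - e)) - lam) / ρ),
        (lam + ρ * (t - s)) * (1 - p) / p) = e :=
  linear_incidence_simulation_general lam ρ p t c hρ hp hp1 hc
end

section
/- Under exponentially decreasing incidence λ(s) = λ·exp(ρ(t−s)) with λ, ρ > 0 and constant prevalence p ∈ (0,1), the equation ∫_{t−c}^{T} (λ(s)(1−p)/p) ds = e, where c is defined by the same integral over [t−c, t] equaling 1, has solution T = t − log(1 + ρ·p·(1−e)/((1−p)·λ))/ρ for all e ∈ [0,1]. -/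
open MeasureTheory Set intervalIntegral

theorem integral_exp_mul_sub {ρ : ℝ} (hρ : ρ ≠ 0) (t a b : ℝ) :
    ∫ s in a..b, Real.exp (ρ * (t - s)) =
      (Real.exp (ρ * (t - a)) - Real.exp (ρ * (t - b))) / ρ := by
  have hshift := integral_comp_sub_left (a := a) (b := b) (fun u => Real.exp (ρ * u)) t
  rw [hshift, integral_comp_mul_left Real.exp hρ, integral_exp, smul_eq_mul]
  ring

theorem exponential_incidence_simulation_general (lam ρ p t c : ℝ)
    (hlam : 0 < lam) (hρ : 0 < ρ) (hp : 0 < p) (hp1 : p < 1)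
    (hc : (lam / ρ) * (Real.exp (ρ * c) - 1) = p / (1 - p)) :
    ∀ e ∈ Icc (0:ℝ) 1,
      (∫ s in (t - c)..(t - Real.log (1 + ρ * p * (1 - e) / ((1 - p) * lam)) / ρ),
        lam * Real.exp (ρ * (t - s)) * (1 - p) / p) = e := by
  intro e he
  set X := ρ * p * (1 - e) / ((1 - p) * lam) with hX_def
  have hq : 0 < 1 - p := sub_pos.mpr hp1
  have hX : 0 ≤ X := div_nonneg (mul_nonneg (by positivity) (sub_nonneg.mpr he.2)) (by positivity)
  have hexp_c : Real.exp (ρ * c) = 1 + ρ * p / ((1 - p) * lam) := by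
    field_simp at hc ⊢
    linarith
  calc (∫ s in (t - c)..(t - Real.log (1 + X) / ρ), lam * Real.exp (ρ * (t - s)) * (1 - p) / p)
      = lam * (1 - p) / p * ∫ s in (t - c)..(t - Real.log (1 + X) / ρ), Real.exp (ρ * (t - s)) := by
        rw [← intervalIntegral.integral_const_mul]
        congr 1 with s
        ring
    _ = lam * (1 - p) / (p * ρ) * (Real.exp (ρ * c) - (1 + X)) := by
        rw [integral_exp_mul_sub hρ.ne', sub_sub_cancel, sub_sub_cancel,
          mul_div_cancel₀ _ hρ.ne', Real.exp_log (by linarith)]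
        field_simp
    _ = e := by
        rw [hexp_c, hX_def]
        field_simp
        ring

/-- Exponentially decreasing incidence: closed-form infection time solving the
simulation integral equation. -/
theorem exponential_incidence_simulation (lam ρ p t c : ℝ)
    (hlam : 0 < lam) (hρ : 0 < ρ) (hp : 0 < p) (hp1 : p < 1) (hcpos : 0 < c)
    (hc : (lam / ρ) * (Real.exp (ρ * c) - 1) = p / (1 - p)) :
    ∀ e ∈ Icc (0:ℝ) 1,
      (∫ s in (t - c)..(t - Real.log (1 + ρ * p * (1 - e) / ((1 - p) * lam)) / ρ),
        lam * Real.exp (ρ * (t - s)) * (1 - p) / p) = e :=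
  exponential_incidence_simulation_general lam ρ p t c hlam hρ hp hp1 hc
end
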